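/- arXiv:2109.13917 — 2 statements merged into one kernel-verified Lean document; each statement's English description precedes it below -/
import Mathlib

section
/- If G : {−1,1}^n → ℝ is a multilinear polynomial of degree at most t and A is the set of x ∈ {−1,1}^n where G(x) = ∏_{i=1}^n x_i, then every function A → ℝ can be represented by a multilinear polynomial of degree at most t + n/2, and consequently |A| ≤ ∑_{k=0}^{⌊n/2⌋+t} C(n,k). -/
/-- Map a Boolean to the corresponding element of `{-1, 1} ⊆ ℝ`. -/
noncomputable def chi (b : Bool) : ℝ := if b then 1 else -1

/-!
On `A` a long character `χ_S = ∏_{i ∈ S} x_i` with `|S| > n/2` equals `G · χ_{Sᶜ}`, a polynomial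
of degree `≤ t + n/2`. As the characters span all functions on the cube, every function on `A` is
such a polynomial. Reducing exponents mod 2 (`x_i ^ 2 = 1`) shows that these restrictions lie in
the span of the characters `χ_S` with `|S| ≤ t + n/2`, which bounds `|A|` by their number.
-/

open MvPolynomial Finset

lemma chi_mul_self (b : Bool) : chi b * chi b = 1 := by cases b <;> simp [chi]

lemma chi_pow (b : Bool) (k : ℕ) : chi b ^ k = if Odd k then chi b else 1 := by
  cases b <;> rcases Nat.even_or_odd k with h | h <;>
    simp [chi, h, h.neg_one_pow, Nat.not_odd_iff_even]

namespace BooleanCube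

variable {ι : Type*}

noncomputable def walsh (S : Finset ι) (x : ι → Bool) : ℝ := ∏ i ∈ S, chi (x i)

lemma walsh_mul_self (S : Finset ι) (x : ι → Bool) : walsh S x * walsh S x = 1 := by
  simp only [walsh, ← prod_mul_distrib, chi_mul_self, prod_const_one]

lemma walsh_univ_mul_walsh_compl [Fintype ι] [DecidableEq ι] (S : Finset ι) (x : ι → Bool) :
    walsh univ x * walsh Sᶜ x = walsh S x := by
  rw [walsh, ← prod_mul_prod_compl S, mul_assoc]
  exact (congr(walsh S x * $(walsh_mul_self Sᶜ x))).trans (mul_one _)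

lemma sum_walsh_mul_walsh [Fintype ι] [DecidableEq ι] (z x : ι → Bool) :
    ∑ S, walsh S z * walsh S x = if z = x then 2 ^ Fintype.card ι else 0 := by
  have hprod : ∑ S, walsh S z * walsh S x = ∏ i, (1 + chi (z i) * chi (x i)) := by
    simp only [prod_one_add, powerset_univ, walsh, prod_mul_distrib]
  rw [hprod]
  split_ifs with hzx
  · simp [hzx, chi_mul_self, one_add_one_eq_two]
  · obtain ⟨i, hi⟩ := Function.ne_iff.1 hzx
    refine prod_eq_zero (mem_univ i) ?_
    revert hi
    cases z i <;> cases x i <;> simp [chi]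

lemma span_range_walsh [Fintype ι] [DecidableEq ι] :
    Submodule.span ℝ (Set.range (walsh (ι := ι))) = ⊤ := by
  rw [eq_top_iff, ← (Pi.basisFun ℝ (ι → Bool)).span_eq, Submodule.span_le]
  rintro _ ⟨z, rfl⟩
  -- Fourier inversion: `δ_z = 2⁻ⁿ ∑_S χ_S(z) χ_S`.
  have hdelta : Pi.basisFun ℝ (ι → Bool) z
      = (2 ^ Fintype.card ι : ℝ)⁻¹ • ∑ S, walsh S z • walsh S := by
    ext x
    simp only [Pi.basisFun_apply, Pi.single_apply, Pi.smul_apply, Finset.sum_apply, smul_eq_mul,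
      sum_walsh_mul_walsh, eq_comm (a := x)]
    split_ifs <;> simp
  rw [hdelta]
  exact Submodule.smul_mem _ _ <| Submodule.sum_mem _ fun S _ =>
    Submodule.smul_mem _ _ <| Submodule.subset_span ⟨S, rfl⟩

noncomputable def cubeEval : MvPolynomial ι ℝ →ₗ[ℝ] (ι → Bool) → ℝ :=
  LinearMap.pi fun x => (aeval fun i => chi (x i)).toLinearMap

lemma cubeEval_apply (Q : MvPolynomial ι ℝ) (x : ι → Bool) :
    cubeEval Q x = eval (fun i => chi (x i)) Q := by
  simp [cubeEval]

lemma cubeEval_prod_X (S : Finset ι) : cubeEval (∏ i ∈ S, X i) = walsh S := by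
  ext x
  simp [cubeEval_apply, walsh]

/-- Since `x_i ^ 2 = 1` on the cube, a monomial only sees the parity of its exponents. -/
lemma cubeEval_monomial [Fintype ι] (m : ι →₀ ℕ) (c : ℝ) :
    cubeEval (monomial m c) = c • walsh {i | Odd (m i)} := by
  ext x
  rw [cubeEval_apply, eval_monomial, Finsupp.prod_fintype _ _ fun _ => pow_zero _,
    Pi.smul_apply, smul_eq_mul, walsh, prod_filter]
  simp only [chi_pow]

lemma card_filter_odd_le_degree [Fintype ι] (m : ι →₀ ℕ) :
    #{i | Odd (m i)} ≤ m.sum fun _ e => e := by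
  rw [Finsupp.sum_fintype _ _ fun _ => rfl, card_eq_sum_ones, sum_filter]
  refine sum_le_sum fun i _ => ?_
  split_ifs with h
  exacts [h.pos, Nat.zero_le _]

lemma map_cubeEval_restrictTotalDegree_le [Fintype ι] (d : ℕ) :
    (restrictTotalDegree ι ℝ d).map cubeEval
      ≤ Submodule.span ℝ (walsh '' {S | S.card ≤ d}) := by
  rintro _ ⟨Q, hQ, rfl⟩
  rw [SetLike.mem_coe, mem_restrictTotalDegree] at hQ
  rw [Q.as_sum, map_sum]
  refine Submodule.sum_mem _ fun m hm => ?_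
  rw [cubeEval_monomial]
  refine Submodule.smul_mem _ _ <| Submodule.subset_span ⟨_, ?_, rfl⟩
  exact (card_filter_odd_le_degree m).trans <| (le_totalDegree hm).trans hQ

lemma card_filter_card_le [Fintype ι] (d : ℕ) :
    #{S : Finset ι | S.card ≤ d} = ∑ k ∈ range (d + 1), (Fintype.card ι).choose k := by
  rw [card_eq_sum_card_fiberwise (f := Finset.card) (t := range (d + 1))
    fun S hS => mem_range_succ_iff.2 (mem_filter.1 hS).2]
  refine sum_congr rfl fun k hk => ?_
  rw [← card_univ, ← card_powersetCard, powersetCard_eq_filter, powerset_univ, filter_filter]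
  congr 1
  ext S
  simp only [mem_filter, mem_univ, true_and, and_iff_right_iff_imp]
  exact fun hS => hS ▸ mem_range_succ_iff.1 hk

lemma totalDegree_prod_X_le {R : Type*} [CommSemiring R] (S : Finset ι) :
    (∏ i ∈ S, X i : MvPolynomial ι R).totalDegree ≤ S.card := by
  have hX (i : ι) : (X i : MvPolynomial ι R).totalDegree ≤ 1 :=
    (totalDegree_monomial_le (Finsupp.single i 1) 1).trans (by simp)
  simpa using (totalDegree_finsetProd _ _).trans (sum_le_sum fun i (_ : i ∈ S) => hX i)

noncomputable def restrictCubeEval (A : Finset (ι → Bool)) : MvPolynomial ι ℝ →ₗ[ℝ] A → ℝ :=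
  LinearMap.funLeft ℝ ℝ ((↑) : A → ι → Bool) ∘ₗ cubeEval

section LowDegreeOnA

variable [Fintype ι] [DecidableEq ι] {A : Finset (ι → Bool)} {G : MvPolynomial ι ℝ} {t : ℕ}

/-- On `A` the long characters are short: `χ_S = G · χ_{Sᶜ}`, and `|Sᶜ| ≤ n/2` when `|S| > n/2`. -/
lemma exists_totalDegree_le_eqOn_walsh (hG : G.totalDegree ≤ t)
    (hGA : ∀ x ∈ A, cubeEval G x = walsh univ x) (S : Finset ι) :
    ∃ Q : MvPolynomial ι ℝ, Q.totalDegree ≤ t + Fintype.card ι / 2 ∧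
      ∀ x ∈ A, cubeEval Q x = walsh S x := by
  by_cases hS : S.card ≤ Fintype.card ι / 2
  · exact ⟨∏ i ∈ S, X i, (totalDegree_prod_X_le S).trans (by omega),
      fun x _ => by rw [cubeEval_prod_X]⟩
  refine ⟨G * ∏ i ∈ Sᶜ, X i, ?_, fun x hx => ?_⟩
  · have hSc : Sᶜ.card = Fintype.card ι - S.card := card_compl S
    exact (totalDegree_mul _ _).trans <| add_le_add hG <|
      (totalDegree_prod_X_le Sᶜ).trans (by omega)
  · rw [cubeEval_apply, map_mul, ← cubeEval_apply, ← cubeEval_apply, hGA x hx, cubeEval_prod_X,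
      walsh_univ_mul_walsh_compl]

lemma map_restrictCubeEval_restrictTotalDegree_eq_top (hG : G.totalDegree ≤ t)
    (hGA : ∀ x ∈ A, cubeEval G x = walsh univ x) :
    (restrictTotalDegree ι ℝ (t + Fintype.card ι / 2)).map (restrictCubeEval A) = ⊤ := by
  rw [eq_top_iff, ← LinearMap.range_eq_top.2
    (LinearMap.funLeft_surjective_of_injective ℝ ℝ _ Subtype.val_injective),
    LinearMap.range_eq_map, ← span_range_walsh, Submodule.map_span, Submodule.span_le]
  rintro _ ⟨_, ⟨S, rfl⟩, rfl⟩
  obtain ⟨Q, hQ, hQS⟩ := exists_totalDegree_le_eqOn_walsh hG hGA S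
  exact ⟨Q, (mem_restrictTotalDegree _ _ _).2 hQ, funext fun x => hQS x x.2⟩

end LowDegreeOnA

lemma card_le_card_filter_card_le_of_map_restrictCubeEval_eq_top [Fintype ι]
    {A : Finset (ι → Bool)} {d : ℕ}
    (htop : (restrictTotalDegree ι ℝ d).map (restrictCubeEval A) = ⊤) :
    #A ≤ #{S : Finset ι | S.card ≤ d} := by
  set R := LinearMap.funLeft ℝ ℝ ((↑) : A → ι → Bool)
  have hle : (⊤ : Submodule ℝ (A → ℝ)) ≤ Submodule.span ℝ
      ↑(({S : Finset ι | S.card ≤ d} : Finset _).image (R ∘ walsh)) := by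
    rw [← htop, restrictCubeEval, Submodule.map_comp, coe_image, Set.image_comp,
      ← Submodule.map_span]
    exact Submodule.map_mono ((map_cubeEval_restrictTotalDegree_le d).trans_eq (by simp))
  calc #A = Module.finrank ℝ (⊤ : Submodule ℝ (A → ℝ)) := by simp
    _ ≤ _ := Submodule.finrank_mono hle
    _ ≤ _ := finrank_span_finset_le_card _
    _ ≤ _ := card_image_le

end BooleanCube

open BooleanCube in
theorem stmt_4 (n t : ℕ) (G : MvPolynomial (Fin n) ℝ) (hG : G.totalDegree ≤ t)
    (A : Finset (Fin n → Bool))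
    (hA : A = Finset.univ.filter (fun x : Fin n → Bool =>
      MvPolynomial.eval (fun i => chi (x i)) G = ∏ i : Fin n, chi (x i))) :
    (∀ f : (Fin n → Bool) → ℝ, ∃ Q : MvPolynomial (Fin n) ℝ,
        Q.totalDegree ≤ t + n / 2 ∧
        ∀ x ∈ A, MvPolynomial.eval (fun i => chi (x i)) Q = f x) ∧
      A.card ≤ ∑ k ∈ Finset.range (n / 2 + t + 1), n.choose k := by
  have hGA : ∀ x ∈ A, cubeEval G x = walsh univ x := fun x hx => by
    rw [hA, mem_filter] at hx
    rw [cubeEval_apply, hx.2, walsh]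
  have htop := map_restrictCubeEval_restrictTotalDegree_eq_top hG hGA
  rw [Fintype.card_fin] at htop
  refine ⟨fun f => ?_, ?_⟩
  · obtain ⟨Q, hQ, hQf⟩ := htop.ge (Submodule.mem_top (x := LinearMap.funLeft ℝ ℝ (↑) f))
    refine ⟨Q, (mem_restrictTotalDegree _ _ _).1 hQ, fun x hx => ?_⟩
    simpa [restrictCubeEval, cubeEval_apply] using congrFun hQf ⟨x, hx⟩
  · calc #A ≤ #{S : Finset (Fin n) | S.card ≤ t + n / 2} :=
          card_le_card_filter_card_le_of_map_restrictCubeEval_eq_top htop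
      _ = _ := by rw [card_filter_card_le, Fintype.card_fin, add_comm t]
end

section
/- The threshold function Th^n_k (which outputs 1 iff at least k of n Boolean inputs are 1) cannot be expressed as a CNF in which every clause has width at most n − k − 1, for 1 ≤ k ≤ n − 1. -/
/-!
The all-zero input has fewer than `k` ones, so it falsifies some clause `c`. Keeping the
variables of `c` at `0` and setting the at least `n - (n - k - 1) = k + 1` unmentioned
variables to `1` still falsifies `c`, although the new input has at least `k` ones.
-/

variable {ι : Type*}

abbrev Clause (ι : Type*) := Finset (ι × Bool)

namespace Clause

def vars [DecidableEq ι] (c : Clause ι) : Finset ι := c.image Prod.fst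

def Sat (c : Clause ι) (x : ι → Bool) : Prop := ∃ l ∈ c, x l.1 = l.2

theorem card_vars_le [DecidableEq ι] (c : Clause ι) : c.vars.card ≤ c.card :=
  Finset.card_image_le

theorem sat_congr [DecidableEq ι] {c : Clause ι} {x y : ι → Bool}
    (h : Set.EqOn x y c.vars) : c.Sat x ↔ c.Sat y := by
  refine exists_congr fun l => and_congr_right fun hl => ?_
  rw [h (Finset.mem_image_of_mem Prod.fst hl)]

theorem exists_not_sat_card_true_ge [Fintype ι] [DecidableEq ι] {C : Finset (Clause ι)}
    {w : ℕ} (hw : ∀ c ∈ C, c.card ≤ w) {x : ι → Bool} (hx : ¬ ∀ c ∈ C, c.Sat x) :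
    ∃ y : ι → Bool, Fintype.card ι - w ≤ (Finset.univ.filter (fun i => y i = true)).card ∧
      ¬ ∀ c ∈ C, c.Sat y := by
  push Not at hx
  obtain ⟨c, hcC, hcx⟩ := hx
  set y := c.vars.piecewise x (fun _ => true)
  have hxy : Set.EqOn x y c.vars := fun i hi => (c.vars.piecewise_eq_of_mem _ _ hi).symm
  have hcompl : c.varsᶜ ⊆ Finset.univ.filter (fun i => y i = true) := fun i hi => by
    simp [y, Finset.piecewise_eq_of_notMem _ _ _ (Finset.mem_compl.mp hi)]
  refine ⟨y, ?_, fun hy => hcx ((sat_congr hxy).mpr (hy c hcC))⟩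
  calc Fintype.card ι - w ≤ Fintype.card ι - c.vars.card := by
        have := (hw c hcC).trans' c.card_vars_le; omega
    _ = c.varsᶜ.card := (Finset.card_compl _).symm
    _ ≤ _ := Finset.card_le_card hcompl

end Clause

/-- A clause is a finite set of literals `(variable, sign)`; it is satisfied by `x`
iff some literal `(i, b)` in it has `x i = b`. A CNF is a finite set of clauses. -/
theorem stmt_8 (n k : ℕ) (hk1 : 1 ≤ k) (hkn : k ≤ n - 1) :
    ¬ ∃ C : Finset (Finset (Fin n × Bool)),
      (∀ c ∈ C, c.card ≤ n - k - 1) ∧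
      (∀ x : Fin n → Bool,
        (k ≤ (Finset.univ.filter (fun i => x i = true)).card ↔
          ∀ c ∈ C, ∃ l ∈ c, x l.1 = l.2)) := by
  rintro ⟨C, hw, hC⟩
  have hzero : ¬ ∀ c ∈ C, Clause.Sat c (fun _ => false) := fun h => by
    have := (hC fun _ => false).mpr h
    simp only [Bool.false_eq_true, Finset.filter_false, Finset.card_empty] at this
    omega
  obtain ⟨y, hy, hCy⟩ := Clause.exists_not_sat_card_true_ge hw hzero
  rw [Fintype.card_fin] at hy
  exact hCy ((hC y).mp (by omega))
end
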